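/- arXiv:2411.16815 — 3 statements merged into one kernel-verified Lean document; each statement's English description precedes it below -/
import Mathlib

section
/- Suppose θ_m perfectly retains the capabilities of θ_A and θ_B. Then for every x_A ∈ X_A, x_B ∈ X_B and all real numbers μ₁, μ₂ with μ₂ ≠ 0 such that μ₁ • x_A + μ₂ • x_B ∈ X_A, one has θ_A x_B = θ_B x_B. -/
/-- If the merged model θ_m perfectly retains the capabilities of θ_A and θ_B,
then whenever a mixed input μ₁ • x_A + μ₂ • x_B (with μ₂ ≠ 0) lies in X_A,
the two fine-tuned models must agree at x_B. -/
theorem merging_mixed_input_forces_agreement {m n : ℕ}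
    (θm θA θB : (Fin m → ℝ) →ₗ[ℝ] (Fin n → ℝ))
    (XA XB : Set (Fin m → ℝ))
    (hA : ∀ x ∈ XA, θm x = θA x) (hB : ∀ x ∈ XB, θm x = θB x) :
    ∀ xA ∈ XA, ∀ xB ∈ XB, ∀ μ₁ μ₂ : ℝ, μ₂ ≠ 0 →
      μ₁ • xA + μ₂ • xB ∈ XA → θA xB = θB xB := by
  intro xA hxA xB hxB μ₁ μ₂ hμ₂ hmix
  have h1 := hA _ hmix
  have h2 := hA _ hxA
  have h3 := hB _ hxB
  simp only [map_add, map_smul, h2, h3] at h1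
  have : μ₂ • θB xB = μ₂ • θA xB := by
    linear_combination (norm := module) h1
  have := smul_right_injective _ hμ₂ this
  exact this.symm
end

section
/- Suppose θ_m perfectly retains the capabilities of θ_A and θ_B, and suppose x_B ∈ X_B satisfies θ_A x_B ≠ θ_B x_B. Then for every x_A ∈ X_A and all real numbers μ₁, μ₂ with μ₂ ≠ 0, the point μ₁ • x_A + μ₂ • x_B does not belong to X_A (Eq. 16 of the proof of Theorem 1). -/
/-- Eq. 16 of the proof of Theorem 1: if θ_m perfectly retains θ_A and θ_B and
θ_A x_B ≠ θ_B x_B for some x_B ∈ X_B, then no nontrivial mix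
μ₁ • x_A + μ₂ • x_B (μ₂ ≠ 0) of inputs can belong to X_A. -/
theorem merging_mixed_input_not_in_XA {m n : ℕ}
    (θm θA θB : (Fin m → ℝ) →ₗ[ℝ] (Fin n → ℝ))
    (XA XB : Set (Fin m → ℝ))
    (hA : ∀ x ∈ XA, θm x = θA x) (hB : ∀ x ∈ XB, θm x = θB x)
    (xB : Fin m → ℝ) (hxB : xB ∈ XB) (hne : θA xB ≠ θB xB) :
    ∀ xA ∈ XA, ∀ μ₁ μ₂ : ℝ, μ₂ ≠ 0 → μ₁ • xA + μ₂ • xB ∉ XA := by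
  intro xA hxA μ₁ μ₂ hμ₂ hmem
  apply hne
  have h1 := hA _ hmem
  have h2 := hA _ hxA
  have h3 := hB _ hxB
  simp only [map_add, map_smul, h2, h3] at h1
  have h4 : μ₂ • θB xB = μ₂ • θA xB := add_left_cancel h1
  exact smul_right_injective _ hμ₂ h4.symm
end

section
/- Suppose θ_m perfectly retains the capabilities of θ_A and θ_B, and suppose X_A is a nonempty open subset of ℝ^m. Then θ_A x_B = θ_B x_B for every x_B ∈ X_B. -/
/-- Continuity version of the first case of Theorem 1: if X_A is a nonempty open
subset of ℝ^m and θ_m perfectly retains the capabilities of θ_A and θ_B, then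
θ_A and θ_B agree on all of X_B. -/
theorem merging_open_forces_agreement {m n : ℕ}
    (θm θA θB : (Fin m → ℝ) →ₗ[ℝ] (Fin n → ℝ))
    (XA XB : Set (Fin m → ℝ))
    (hA : ∀ x ∈ XA, θm x = θA x) (hB : ∀ x ∈ XB, θm x = θB x)
    (hne : XA.Nonempty) (hopen : IsOpen XA) :
    ∀ xB ∈ XB, θA xB = θB xB := by
  -- First show θm = θA everywhere.
  obtain ⟨x0, hx0⟩ := hne
  obtain ⟨ε, hε, hball⟩ := Metric.isOpen_iff.mp hopen x0 hx0
  have key : ∀ v : Fin m → ℝ, θm v = θA v := by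
    intro v
    set t : ℝ := ε / (2 * (‖v‖ + 1)) with ht
    have hvpos : (0:ℝ) < ‖v‖ + 1 := by positivity
    have htpos : 0 < t := by positivity
    have hmem : x0 + t • v ∈ XA := by
      apply hball
      rw [Metric.mem_ball, dist_eq_norm]
      have : x0 + t • v - x0 = t • v := by abel
      rw [this, norm_smul, Real.norm_eq_abs, abs_of_pos htpos]
      calc t * ‖v‖ ≤ t * (‖v‖ + 1) := by nlinarith
        _ = ε / 2 := by rw [ht]; field_simp
        _ < ε := by linarith
    have h1 := hA _ hmem
    have h0 := hA _ hx0
    rw [map_add, map_add, h0, map_smul, map_smul] at h1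
    have h2 : t • θm v = t • θA v := by
      have := add_left_cancel h1
      exact this
    have := smul_right_injective (Fin n → ℝ) (ne_of_gt htpos) h2
    exact this
  intro xB hxB
  rw [← key xB, hB xB hxB]
end
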